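/- Let G = (V, E) be a weakly connected directed graph. The group WR(V ∪ E, A) of rigid-balanced functions on vertices and edges is isomorphic to A^(|V|) × HR(E, A), hence to A^(|V|) × A^(|V| - k̄(G) + r(G)). -/

import Mathlib

/-! Since the vertices of a cycle are the sources of its edges, the shear
`(g, f) ↦ (g, fun e => g (src e) + f e)` identifies `WR` with `(V → A) × HR`.

A function `f` with zero sum on cycles has zero sum on every closed walk (split the walk at a
repeated edge). Fix a root in each strong component and let `φ v` be the sum of `f` along a
walk from the root of `v` to `v`; then `f e = φ (tgt e) - φ (src e)` for every edge inside a
strong component, and every cycle lies inside one. Conversely, a potential vanishing at the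
roots together with arbitrary values on the `r(G)` edges between components defines such an
`f`. So `HR ≃ A^(|V| - k̄(G)) × A^r(G)`. -/

/-- A directed multigraph: edges with a source and a target vertex. -/
structure Dgraph (V : Type) (E : Type) where
  src : E → V
  tgt : E → V

namespace Dgraph

variable {V E : Type}

/-- The symmetrization of a digraph: each edge together with its formal reversal.
`Sum.inl e` is the edge `e` itself, `Sum.inr e` is its reversal `ē`. -/
def sym (G : Dgraph V E) : Dgraph V (E ⊕ E) where
  src := Sum.elim G.src G.tgt
  tgt := Sum.elim G.tgt G.src

/-- A cycle: a list of pairwise distinct edges, consecutively incident,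
and closed (the target of the last edge is the source of the first).
The empty list is the trivial cycle. -/
def IsCycle (G : Dgraph V E) (l : List E) : Prop :=
  l.Nodup ∧ l.Chain' (fun a b => G.tgt a = G.src b) ∧
    ∀ h : l ≠ [], G.tgt (l.getLast h) = G.src (l.head h)

/-- Adjacency in the underlying undirected graph. -/
def Adj (G : Dgraph V E) (x y : V) : Prop :=
  ∃ e, (G.src e = x ∧ G.tgt e = y) ∨ (G.src e = y ∧ G.tgt e = x)

/-- Weak connectivity: the underlying undirected graph is connected. -/
def WeaklyConnected (G : Dgraph V E) : Prop :=
  ∀ x y : V, Relation.ReflTransGen G.Adj x y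

/-- The underlying undirected graph is bipartite. -/
def Bipartite (G : Dgraph V E) : Prop :=
  ∃ c : V → Bool, ∀ e, c (G.src e) ≠ c (G.tgt e)

variable (A : Type) [AddCommGroup A]

/-- A function on the symmetrized edge set taking opposite values on reversed edges. -/
def Antisym (f : E ⊕ E → A) : Prop :=
  ∀ e : E, f (Sum.inr e) = - f (Sum.inl e)

/-- A function on edges is balanced if its sum along every cycle is zero. -/
def BalancedE (G : Dgraph V E) (f : E → A) : Prop :=
  ∀ l : List E, G.IsCycle l → (l.map f).sum = 0

/-- A pair of a function `g` on vertices and `f` on edges is balanced if the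
alternating sum `g v₁ + f e₁ + ⋯ + g vₙ + f eₙ` along every cycle is zero
(the vertices of a cycle are exactly the sources of its edges). -/
def BalancedVE (G : Dgraph V E) (g : V → A) (f : E → A) : Prop :=
  ∀ l : List E, G.IsCycle l → (l.map (fun e => g (G.src e) + f e)).sum = 0

variable {A}

lemma sum_map_add (l : List E) (f g : E → A) :
    (l.map (fun e => f e + g e)).sum = (l.map f).sum + (l.map g).sum := by
  induction l with
  | nil => simp
  | cons a t ih => simp only [List.map_cons, List.sum_cons, ih]; abel

lemma sum_map_neg (l : List E) (f : E → A) :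
    (l.map (fun e => - f e)).sum = - (l.map f).sum := by
  induction l with
  | nil => simp
  | cons a t ih => simp only [List.map_cons, List.sum_cons, ih]; abel

lemma sum_map_eq_zero (l : List E) (f : E → A) (h : ∀ e, f e = 0) :
    (l.map f).sum = 0 := by
  induction l with
  | nil => simp
  | cons a t ih => simp [h, ih]

variable (A)

/-- `HF(𝔼, A)`: the group of flexible-balanced functions on the symmetrized edges. -/
def HF (G : Dgraph V E) : AddSubgroup ((E ⊕ E) → A) where
  carrier := {f | Antisym A f ∧ BalancedE A G.sym f}
  zero_mem' :=
    ⟨fun e => by simp, fun l _ => sum_map_eq_zero l _ (fun e => by simp)⟩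
  add_mem' := by
    intro f g hf hg
    refine ⟨fun e => ?_, fun l hl => ?_⟩
    · have h1 := hf.1 e; have h2 := hg.1 e
      simp only [Pi.add_apply]
      rw [h1, h2]; abel
    · have hmap : l.map (f + g) = l.map (fun e => f e + g e) := rfl
      rw [hmap, sum_map_add l f g, hf.2 l hl, hg.2 l hl, add_zero]
  neg_mem' := by
    intro f hf
    refine ⟨fun e => ?_, fun l hl => ?_⟩
    · simp only [Pi.neg_apply]; rw [hf.1 e]
    · have hmap : l.map (-f) = l.map (fun e => - f e) := rfl
      rw [hmap, sum_map_neg l f, hf.2 l hl, neg_zero]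

/-- `WF(V ∪ 𝔼, A)`: the group of flexible-balanced functions on vertices and edges,
encoded as pairs (function on vertices, function on symmetrized edges). -/
def WF (G : Dgraph V E) : AddSubgroup ((V → A) × ((E ⊕ E) → A)) where
  carrier := {p | Antisym A p.2 ∧ BalancedVE A G.sym p.1 p.2}
  zero_mem' :=
    ⟨fun e => by simp, fun l _ => sum_map_eq_zero l _ (fun e => by simp)⟩
  add_mem' := by
    intro p q hp hq
    refine ⟨fun e => ?_, fun l hl => ?_⟩
    · have h1 := hp.1 e; have h2 := hq.1 e
      simp only [Prod.snd_add, Pi.add_apply]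
      rw [h1, h2]; abel
    · have h := sum_map_add l (fun e => p.1 (G.sym.src e) + p.2 e)
        (fun e => q.1 (G.sym.src e) + q.2 e)
      simp only [Prod.fst_add, Prod.snd_add, Pi.add_apply]
      have heq : (l.map (fun e => (p.1 (G.sym.src e) + q.1 (G.sym.src e)) + (p.2 e + q.2 e))).sum
          = (l.map (fun e => (p.1 (G.sym.src e) + p.2 e) + (q.1 (G.sym.src e) + q.2 e))).sum := by
        congr 1; apply List.map_congr_left; intro e _; abel
      rw [heq, h, hp.2 l hl, hq.2 l hl, add_zero]
  neg_mem' := by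
    intro p hp
    refine ⟨fun e => ?_, fun l hl => ?_⟩
    · simp only [Prod.snd_neg, Pi.neg_apply]; rw [hp.1 e]
    · have h := sum_map_neg l (fun e => p.1 (G.sym.src e) + p.2 e)
      simp only [Prod.fst_neg, Prod.snd_neg, Pi.neg_apply]
      have heq : (l.map (fun e => -p.1 (G.sym.src e) + -p.2 e)).sum
          = (l.map (fun e => -(p.1 (G.sym.src e) + p.2 e))).sum := by
        congr 1; apply List.map_congr_left; intro e _; abel
      rw [heq, h, hp.2 l hl, neg_zero]

/-- `BF(V, A)`: the group of flexible-balanceable functions on vertices. -/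
def BF (G : Dgraph V E) : AddSubgroup (V → A) where
  carrier := {g | ∃ f : (E ⊕ E) → A, (g, f) ∈ WF A G}
  zero_mem' := ⟨0, (WF A G).zero_mem⟩
  add_mem' := by
    rintro g1 g2 ⟨f1, h1⟩ ⟨f2, h2⟩
    exact ⟨f1 + f2, (WF A G).add_mem h1 h2⟩
  neg_mem' := by
    rintro g ⟨f, h⟩
    exact ⟨-f, (WF A G).neg_mem h⟩

/-- The subgroup of elements of order dividing 2. -/
def Two : AddSubgroup A where
  carrier := {a | a + a = 0}
  zero_mem' := by simp
  add_mem' := by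
    intro a b ha hb
    have h : a + b + (a + b) = (a + a) + (b + b) := by abel
    simp only [Set.mem_setOf_eq] at *
    rw [h, ha, hb, add_zero]
  neg_mem' := by
    intro a ha
    simp only [Set.mem_setOf_eq] at *
    rw [← neg_add]; simp [ha]

/-- `HR(E, A)`: the group of rigid-balanced functions on edges. -/
def HR (G : Dgraph V E) : AddSubgroup (E → A) where
  carrier := {f | BalancedE A G f}
  zero_mem' := fun l _ => sum_map_eq_zero l _ (fun e => by simp)
  add_mem' := by
    intro f g hf hg l hl
    have hmap : l.map (f + g) = l.map (fun e => f e + g e) := rfl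
    rw [hmap, sum_map_add l f g, hf l hl, hg l hl, add_zero]
  neg_mem' := by
    intro f hf l hl
    have hmap : l.map (-f) = l.map (fun e => - f e) := rfl
    rw [hmap, sum_map_neg l f, hf l hl, neg_zero]

/-- `WR(V ∪ E, A)`: the group of rigid-balanced functions on vertices and edges,
encoded as pairs (function on vertices, function on edges). -/
def WR (G : Dgraph V E) : AddSubgroup ((V → A) × (E → A)) where
  carrier := {p | BalancedVE A G p.1 p.2}
  zero_mem' := fun l _ => sum_map_eq_zero l _ (fun e => by simp)
  add_mem' := by
    intro p q hp hq l hl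
    have h := sum_map_add l (fun e => p.1 (G.src e) + p.2 e)
      (fun e => q.1 (G.src e) + q.2 e)
    simp only [Prod.fst_add, Prod.snd_add, Pi.add_apply]
    have heq : (l.map (fun e => (p.1 (G.src e) + q.1 (G.src e)) + (p.2 e + q.2 e))).sum
        = (l.map (fun e => (p.1 (G.src e) + p.2 e) + (q.1 (G.src e) + q.2 e))).sum := by
      congr 1; apply List.map_congr_left; intro e _; abel
    rw [heq, h, hp l hl, hq l hl, add_zero]
  neg_mem' := by
    intro p hp l hl
    have h := sum_map_neg l (fun e => p.1 (G.src e) + p.2 e)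
    simp only [Prod.fst_neg, Prod.snd_neg, Pi.neg_apply]
    have heq : (l.map (fun e => -p.1 (G.src e) + -p.2 e)).sum
        = (l.map (fun e => -(p.1 (G.src e) + p.2 e))).sum := by
      congr 1; apply List.map_congr_left; intro e _; abel
    rw [heq, h, hp l hl, neg_zero]

variable {A}

/-- One-step directed reachability. -/
def Step (G : Dgraph V E) (x y : V) : Prop := ∃ e, G.src e = x ∧ G.tgt e = y

/-- Directed reachability. -/
def Reach (G : Dgraph V E) : V → V → Prop := Relation.ReflTransGen G.Step

/-- Every vertex is reachable from every other vertex by a directed path. -/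
def StronglyConnected (G : Dgraph V E) : Prop := ∀ x y : V, G.Reach x y

/-- Mutual directed reachability as an equivalence (setoid) on vertices;
its classes are the strongly connected components. -/
def scSetoid (G : Dgraph V E) : Setoid V where
  r x y := G.Reach x y ∧ G.Reach y x
  iseqv := ⟨fun _ => ⟨.refl, .refl⟩, fun h => ⟨h.2, h.1⟩,
    fun h1 h2 => ⟨h1.1.trans h2.1, h2.2.trans h1.2⟩⟩

/-- The number `k̄(G)` of strongly connected components. -/
noncomputable def numSCC (G : Dgraph V E) : ℕ := Nat.card (Quotient G.scSetoid)

/-- The number `r(G)` of edges joining vertices in distinct strongly connected components. -/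
noncomputable def numCrossEdges (G : Dgraph V E) : ℕ :=
  Nat.card {e : E // ¬ G.scSetoid.r (G.src e) (G.tgt e)}

/-- A directed path from `x` to `y`: pairwise distinct, consecutively incident edges,
starting at `x` and ending at `y`; the empty path joins each vertex to itself. -/
def IsPathFrom (G : Dgraph V E) (l : List E) (x y : V) : Prop :=
  l.Nodup ∧ l.Chain' (fun a b => G.tgt a = G.src b) ∧
    ((l = [] ∧ x = y) ∨ ∃ h : l ≠ [], G.src (l.head h) = x ∧ G.tgt (l.getLast h) = y)

/-- Reorientation of the edges: edge `e` keeps its direction iff `o e = true`. -/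
def orient (G : Dgraph V E) (o : E → Bool) : Dgraph V E where
  src e := if o e then G.src e else G.tgt e
  tgt e := if o e then G.tgt e else G.src e

/-- The underlying edge of a symmetrized edge. -/
def proj : E ⊕ E → E := Sum.elim id id

/-- A cycle in the underlying *undirected* graph: edges may be traversed in either
direction, and the underlying edges are pairwise distinct. -/
def IsUCycle (G : Dgraph V E) (l : List (E ⊕ E)) : Prop :=
  (l.map proj).Nodup ∧ l.Chain' (fun a b => G.sym.tgt a = G.sym.src b) ∧
    ∀ h : l ≠ [], G.sym.tgt (l.getLast h) = G.sym.src (l.head h)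

variable (A)

/-- A function on the edges of an undirected graph is balanced if its sum along
every undirected cycle (each edge contributing its value regardless of the
traversal direction) is zero. -/
def UBalanced (G : Dgraph V E) (f : E → A) : Prop :=
  ∀ l : List (E ⊕ E), G.IsUCycle l → (l.map (fun ee => f (proj ee))).sum = 0

/-- The subgroup of functions on vertices vanishing at a chosen base vertex. -/
def vanishing (v₀ : V) : AddSubgroup (V → A) where
  carrier := {g | g v₀ = 0}
  zero_mem' := by simp
  add_mem' := by
    intro a b ha hb
    simp only [Set.mem_setOf_eq, Pi.add_apply] at *
    rw [ha, hb, add_zero]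
  neg_mem' := by
    intro a ha
    simp only [Set.mem_setOf_eq, Pi.neg_apply] at *
    rw [ha, neg_zero]

variable {A}

/-- The subgraph induced by a strongly connected component `j`. -/
def compGraph (G : Dgraph V E) (j : Quotient G.scSetoid) :
    Dgraph {v : V // Quotient.mk G.scSetoid v = j}
      {e : E // Quotient.mk G.scSetoid (G.src e) = j ∧ Quotient.mk G.scSetoid (G.tgt e) = j} where
  src e := ⟨G.src e.1, e.2.1⟩
  tgt e := ⟨G.tgt e.1, e.2.2⟩

end Dgraph

namespace Dgraph

variable {V E A : Type} [AddCommGroup A] {G : Dgraph V E}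

inductive Walk (G : Dgraph V E) : V → V → List E → Prop
  | nil (x : V) : Walk G x x []
  | cons (e : E) {y : V} {l : List E} : Walk G (G.tgt e) y l → Walk G (G.src e) y (e :: l)

@[simp]
lemma walk_nil_iff {x y : V} : G.Walk x y [] ↔ x = y :=
  ⟨fun h => by cases h; rfl, fun h => h ▸ .nil x⟩

@[simp]
lemma walk_cons_iff {x y : V} {e : E} {l : List E} :
    G.Walk x y (e :: l) ↔ x = G.src e ∧ G.Walk (G.tgt e) y l :=
  ⟨fun h => by cases h with | cons _ h => exact ⟨rfl, h⟩, fun ⟨hx, h⟩ => hx ▸ .cons e h⟩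

lemma walk_append_iff {x z : V} {l m : List E} :
    G.Walk x z (l ++ m) ↔ ∃ y, G.Walk x y l ∧ G.Walk y z m := by
  induction l generalizing x with
  | nil => simp
  | cons e l ih => simp [ih, and_assoc]

lemma Walk.append {x y z : V} {l m : List E} (h₁ : G.Walk x y l) (h₂ : G.Walk y z m) :
    G.Walk x z (l ++ m) :=
  walk_append_iff.2 ⟨y, h₁, h₂⟩

lemma Walk.reach {x y : V} {l : List E} (h : G.Walk x y l) : G.Reach x y := by
  induction h with
  | nil => exact .refl
  | cons e _ ih => exact .head ⟨e, rfl, rfl⟩ ih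

lemma Walk.reach_src_of_mem {x y : V} {l : List E} (h : G.Walk x y l) {e : E} (he : e ∈ l) :
    G.Reach x (G.src e) ∧ G.Reach (G.tgt e) y := by
  obtain ⟨s, t, rfl⟩ := List.append_of_mem he
  simp only [walk_append_iff, walk_cons_iff] at h
  obtain ⟨_, hs, rfl, ht⟩ := h
  exact ⟨hs.reach, ht.reach⟩

lemma exists_walk_of_reach {x y : V} (h : G.Reach x y) : ∃ l, G.Walk x y l := by
  induction h using Relation.ReflTransGen.head_induction_on with
  | refl => exact ⟨[], .nil _⟩
  | head hstep _ ih =>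
    obtain ⟨e, rfl, rfl⟩ := hstep
    obtain ⟨l, hl⟩ := ih
    exact ⟨e :: l, .cons e hl⟩

lemma Walk.scSetoid_r_of_mem {x y : V} {l : List E} (h : G.Walk x y l) (hyx : G.Reach y x)
    {e : E} (he : e ∈ l) : G.scSetoid.r (G.src e) (G.tgt e) :=
  have ⟨hxs, hty⟩ := h.reach_src_of_mem he
  ⟨.single ⟨e, rfl, rfl⟩, (hty.trans hyx).trans hxs⟩

lemma walk_iff_isChain {l : List E} (hl : l ≠ []) {x y : V} :
    G.Walk x y l ↔ l.IsChain (fun a b => G.tgt a = G.src b) ∧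
      G.src (l.head hl) = x ∧ G.tgt (l.getLast hl) = y := by
  induction l generalizing x with
  | nil => exact absurd rfl hl
  | cons e l ih =>
    rcases l with _ | ⟨e', l⟩
    · simp [eq_comm]
    · simp [List.isChain_cons_cons, ih, eq_comm, and_left_comm, and_assoc]

lemma IsCycle.walk {l : List E} (hc : G.IsCycle l) (hl : l ≠ []) :
    G.Walk (G.src (l.head hl)) (G.src (l.head hl)) l :=
  (walk_iff_isChain hl).2 ⟨hc.2.1, rfl, hc.2.2 hl⟩

lemma Walk.isCycle {x : V} {l : List E} (h : G.Walk x x l) (hl : l.Nodup) : G.IsCycle l := by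
  refine ⟨hl, ?_, fun hne => ?_⟩
  · rcases eq_or_ne l [] with rfl | hne
    · exact List.isChain_nil
    · exact ((walk_iff_isChain hne).1 h).1
  · obtain ⟨-, hs, ht⟩ := (walk_iff_isChain hne).1 h
    rw [hs, ht]

lemma Walk.sum_map_eq_sub {x y : V} {l : List E} (h : G.Walk x y l) {φ : V → A} {f : E → A}
    (hf : ∀ e ∈ l, f e = φ (G.tgt e) - φ (G.src e)) : (l.map f).sum = φ y - φ x := by
  induction h with
  | nil => simp
  | cons e _ ih =>
    rw [List.map_cons, List.sum_cons, ih fun e' he' => hf e' (List.mem_cons_of_mem _ he'),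
      hf e List.mem_cons_self]
    abel

lemma exists_eq_append_cons_append_cons_of_not_nodup {α : Type} {l : List α} (h : ¬ l.Nodup) :
    ∃ a l₁ l₂ l₃, l = l₁ ++ a :: (l₂ ++ a :: l₃) := by
  obtain ⟨a, ha⟩ : ∃ a, List.Sublist [a, a] l := by simpa [List.nodup_iff_sublist] using h
  obtain ⟨r₁, r₂, rfl, ha₁, ha₂⟩ := List.cons_sublist_iff.1 ha
  obtain ⟨l₁, l₂, rfl⟩ := List.append_of_mem ha₁
  obtain ⟨l₃, l₄, rfl⟩ := List.append_of_mem (List.singleton_sublist.1 ha₂)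
  exact ⟨a, l₁, l₂ ++ l₃, l₄, by simp⟩

/-- A closed walk that repeats an edge `a` splits at the two occurrences of `a` into two
shorter closed walks, so by induction on the length it is a sum of cycles. -/
lemma BalancedE.sum_map_eq_zero_of_walk {f : E → A} (hf : BalancedE A G f) {x : V}
    {l : List E} (h : G.Walk x x l) : (l.map f).sum = 0 := by
  induction hn : l.length using Nat.strong_induction_on generalizing x l with
  | _ n ih =>
  by_cases hl : l.Nodup
  · exact hf l (h.isCycle hl)
  obtain ⟨a, l₁, l₂, l₃, rfl⟩ := exists_eq_append_cons_append_cons_of_not_nodup hl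
  simp only [walk_append_iff, walk_cons_iff] at h
  obtain ⟨_, hl₁, rfl, _, hl₂, rfl, hl₃⟩ := h
  have hloop : ((a :: l₂).map f).sum = 0 := ih _ (by simp at hn ⊢; omega) (.cons a hl₂) rfl
  have hrest : ((l₁ ++ a :: l₃).map f).sum = 0 :=
    ih _ (by simp at hn ⊢; omega) (hl₁.append (.cons a hl₃)) rfl
  simp only [List.map_append, List.map_cons, List.sum_append, List.sum_cons] at hloop hrest ⊢
  linear_combination (norm := abel) hrest + hloop

variable (G) in
noncomputable def root (v : V) : V := (Quotient.mk G.scSetoid v).out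

lemma root_r (v : V) : G.scSetoid.r (G.root v) v := Quotient.mk_out v

lemma root_eq_root_of_r {v w : V} (h : G.scSetoid.r v w) : G.root v = G.root w :=
  congrArg Quotient.out (Quotient.sound h)

lemma root_root (v : V) : G.root (G.root v) = G.root v :=
  root_eq_root_of_r (root_r v)

variable (G) in
noncomputable def rootWalk (v : V) : List E :=
  (exists_walk_of_reach (root_r (G := G) v).1).choose

lemma walk_rootWalk (v : V) : G.Walk (G.root v) v (G.rootWalk v) :=
  (exists_walk_of_reach (root_r v).1).choose_spec

variable (G) in
noncomputable def potential (f : E → A) (v : V) : A := ((G.rootWalk v).map f).sum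

lemma potential_add (f g : E → A) (v : V) :
    G.potential (f + g) v = G.potential f v + G.potential g v :=
  List.sum_map_add

lemma BalancedE.potential_eq_zero {f : E → A} (hf : BalancedE A G f) {v : V}
    (hv : G.root v = v) : G.potential f v = 0 :=
  hf.sum_map_eq_zero_of_walk (hv ▸ walk_rootWalk v)

/-- Close the root walks to `src e` (followed by `e`) and to `tgt e` with one and the same
walk from `tgt e` back to the root, and compare the two zero sums. -/
lemma BalancedE.eq_potential_sub {f : E → A} (hf : BalancedE A G f) {e : E}
    (he : G.scSetoid.r (G.src e) (G.tgt e)) :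
    f e = G.potential f (G.tgt e) - G.potential f (G.src e) := by
  obtain ⟨back, hback⟩ := exists_walk_of_reach (root_r (G.tgt e)).2
  have hsrc := (root_eq_root_of_r he) ▸ walk_rootWalk (G.src e)
  have h₁ := hf.sum_map_eq_zero_of_walk (hsrc.append (.cons e hback))
  have h₂ := hf.sum_map_eq_zero_of_walk ((walk_rootWalk (G.tgt e)).append hback)
  simp only [List.map_append, List.map_cons, List.sum_append, List.sum_cons] at h₁ h₂
  unfold potential
  linear_combination (norm := abel) h₁ - h₂

variable (G) in
abbrev NonRoot : Type := {v : V // v ≠ G.root v}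

variable (G) in
abbrev CrossEdge : Type := {e : E // ¬ G.scSetoid.r (G.src e) (G.tgt e)}

open Classical in
variable (G) in
noncomputable def extendByZero (q : G.NonRoot → A) (v : V) : A :=
  if h : v ≠ G.root v then q ⟨v, h⟩ else 0

lemma extendByZero_root (q : G.NonRoot → A) (v : V) : G.extendByZero q (G.root v) = 0 :=
  dif_neg (not_not.2 (root_root v).symm)

lemma BalancedE.extendByZero_potential {f : E → A} (hf : BalancedE A G f) :
    G.extendByZero (fun v => G.potential f v) = G.potential f := by
  funext v
  by_cases hv : v ≠ G.root v
  · exact dif_pos hv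
  · rw [extendByZero, dif_neg hv, hf.potential_eq_zero (not_not.1 hv).symm]

open Classical in
variable (G) in
noncomputable def ofPotential (q : G.NonRoot → A) (c : G.CrossEdge → A) (e : E) : A :=
  if h : G.scSetoid.r (G.src e) (G.tgt e) then
    G.extendByZero q (G.tgt e) - G.extendByZero q (G.src e)
  else c ⟨e, h⟩

lemma Walk.sum_map_ofPotential {x y : V} {l : List E} (h : G.Walk x y l) (hyx : G.Reach y x)
    (q : G.NonRoot → A) (c : G.CrossEdge → A) :
    (l.map (G.ofPotential q c)).sum = G.extendByZero q y - G.extendByZero q x :=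
  h.sum_map_eq_sub fun _ he => dif_pos (h.scSetoid_r_of_mem hyx he)

lemma balancedE_ofPotential (q : G.NonRoot → A) (c : G.CrossEdge → A) :
    BalancedE A G (G.ofPotential q c) := by
  intro l hl
  rcases eq_or_ne l [] with rfl | hne
  · rfl
  · rw [(hl.walk hne).sum_map_ofPotential .refl, sub_self]

lemma potential_ofPotential (q : G.NonRoot → A) (c : G.CrossEdge → A) (v : G.NonRoot) :
    G.potential (G.ofPotential q c) v = q v := by
  rw [potential, (walk_rootWalk v.1).sum_map_ofPotential (root_r v.1).2, extendByZero_root,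
    sub_zero, extendByZero, dif_pos v.2]

lemma BalancedE.ofPotential_potential {f : E → A} (hf : BalancedE A G f) :
    G.ofPotential (fun v => G.potential f v) (fun e => f e) = f := by
  funext e
  by_cases he : G.scSetoid.r (G.src e) (G.tgt e)
  · rw [ofPotential, dif_pos he, hf.extendByZero_potential, hf.eq_potential_sub he]
  · exact dif_neg he

variable (A G) in
noncomputable def hrEquiv : HR A G ≃+ (G.NonRoot → A) × (G.CrossEdge → A) where
  toFun f := (fun v => G.potential (f : E → A) v, fun e => (f : E → A) e)
  invFun p := ⟨G.ofPotential p.1 p.2, balancedE_ofPotential p.1 p.2⟩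
  left_inv f := Subtype.ext (BalancedE.ofPotential_potential f.2)
  right_inv p := Prod.ext (funext (potential_ofPotential p.1 p.2)) (funext fun e => dif_neg e.2)
  map_add' f g := Prod.ext (funext fun v => potential_add (G := G) (f : E → A) g v.1) rfl

variable (A G) in
noncomputable def wrEquiv : WR A G ≃+ (V → A) × HR A G where
  toFun p := (p.1.1, ⟨fun e => p.1.1 (G.src e) + p.1.2 e, p.2⟩)
  invFun q := ⟨(q.1, fun e => q.2.1 e - q.1 (G.src e)), by
    show BalancedE A G fun e => q.1 (G.src e) + (q.2.1 e - q.1 (G.src e))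
    simp only [add_sub_cancel]
    exact q.2.2⟩
  left_inv p := by ext <;> simp
  right_inv q := by ext <;> simp
  map_add' p q := by ext <;> simp [add_add_add_comm]

lemma eq_root_iff_mem_range_out {v : V} :
    v = G.root v ↔ v ∈ Set.range (Quotient.out : Quotient G.scSetoid → V) :=
  ⟨fun h => ⟨_, h.symm⟩, by rintro ⟨j, rfl⟩; simp [root]⟩

lemma natCard_nonRoot [Fintype V] : Nat.card G.NonRoot = Nat.card V - G.numSCC := by
  classical
  have hroots : Nat.card {v // v = G.root v} = G.numSCC := by
    rw [numSCC, ← Nat.card_range_of_injective Quotient.out_injective]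
    exact Nat.card_congr (Equiv.subtypeEquivRight fun _ => eq_root_iff_mem_range_out)
  simp only [← hroots, Nat.card_eq_fintype_card, Fintype.card_subtype_compl]

end Dgraph

theorem stmt11_general (V E : Type) [Fintype V] [Fintype E] (A : Type) [AddCommGroup A]
    (G : Dgraph V E) :
    Nonempty (Dgraph.WR A G ≃+ ((V → A) × Dgraph.HR A G)) ∧
    Nonempty (Dgraph.WR A G ≃+
      ((V → A) × (Fin (Nat.card V - G.numSCC + G.numCrossEdges) → A))) := by
  refine ⟨⟨Dgraph.wrEquiv A G⟩, ⟨?_⟩⟩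
  have hcard : Nat.card (G.NonRoot ⊕ G.CrossEdge) = Nat.card V - G.numSCC + G.numCrossEdges := by
    rw [Nat.card_sum, Dgraph.natCard_nonRoot, Dgraph.numCrossEdges]
  exact (Dgraph.wrEquiv A G).trans <| (AddEquiv.refl _).prodCongr <| (Dgraph.hrEquiv A G).trans <|
    (LinearEquiv.sumArrowLequivProdArrow _ _ ℤ A).toAddEquiv.symm.trans <|
      AddEquiv.arrowCongr (Finite.equivFinOfCardEq hcard) (AddEquiv.refl A)

/-- For a finite weakly connected directed graph, the group
`WR(V ∪ E, A)` of rigid-balanced functions on vertices and edges is isomorphic to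
`A^(|V|) × HR(E, A)`, hence to `A^(|V|) × A^(|V| - k̄(G) + r(G))`. -/
theorem stmt11 (V E : Type) [Fintype V] [Fintype E] (A : Type) [AddCommGroup A]
    (G : Dgraph V E) (hG : G.WeaklyConnected) :
    Nonempty (Dgraph.WR A G ≃+ ((V → A) × Dgraph.HR A G)) ∧
    Nonempty (Dgraph.WR A G ≃+
      ((V → A) × (Fin (Nat.card V - G.numSCC + G.numCrossEdges) → A))) :=
  stmt11_general V E A G
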